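/- Let X ⊆ ℝ^d be a locally finite set, let x ∈ X be such that X ∖ {x} is nonempty, and let K ⊆ ℝ^d be any set. Assume that for every y ∈ X with v_X(x) ∩ v_X(y) ≠ ∅ one has y ∈ K if and only if x ∈ K. Then v_{X∖{x}}(K) = v_X(K). -/

import Mathlib

open Metric

/-- The Voronoi cell of `x` with respect to the point set `X`. -/
def voronoiCell {d : ℕ} (X : Set (EuclideanSpace ℝ (Fin d)))
    (x : EuclideanSpace ℝ (Fin d)) : Set (EuclideanSpace ℝ (Fin d)) :=
  {z | ∀ y ∈ X, dist z x ≤ dist z y}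

/-- The Voronoi approximation of `A` with respect to `X`: the union of all
Voronoi cells with nucleus in `A`. -/
def voronoiApprox {d : ℕ} (X A : Set (EuclideanSpace ℝ (Fin d))) :
    Set (EuclideanSpace ℝ (Fin d)) :=
  ⋃ x ∈ X ∩ A, voronoiCell X x

/-!
If `z` lies in the cell of `x` and, once `x` is removed, in the cell of `y`, then walking from `z`
towards `y` one reaches a point equidistant from `x` and `y` while staying in the cell of `y`
(cells are star-shaped about their nucleus); that point lies in both cells of `X`, so `x` and `y`
are neighbours. Hence removing `x` only reassigns points of its cell to neighbours of `x`, which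
lie on the same side of `K` as `x`. Local finiteness provides a nearest remaining nucleus.
-/

section Voronoi

variable {d : ℕ} {X : Set (EuclideanSpace ℝ (Fin d))} {x y z : EuclideanSpace ℝ (Fin d)}

theorem voronoiCell_anti {Y : Set (EuclideanSpace ℝ (Fin d))} (hXY : X ⊆ Y) :
    voronoiCell Y x ⊆ voronoiCell X x :=
  fun _ hz w hw => hz w (hXY hw)

theorem starConvex_voronoiCell (X : Set (EuclideanSpace ℝ (Fin d)))
    (x : EuclideanSpace ℝ (Fin d)) : StarConvex ℝ x (voronoiCell X x) := by
  refine starConvex_iff_segment_subset.2 fun w hw p hp v hv => ?_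
  have hsplit : dist x p + dist p w = dist x w := dist_add_dist_of_mem_segment hp
  calc dist p x = dist w x - dist w p := by
        rw [dist_comm p x, dist_comm w x, dist_comm w p]; linarith
    _ ≤ dist w v - dist w p := by gcongr; exact hw v hv
    _ ≤ dist p v := by linarith [dist_triangle w p v]

theorem mem_voronoiCell_of_mem_diff_singleton (h : z ∈ voronoiCell (X \ {x}) y)
    (hyx : dist z y ≤ dist z x) : z ∈ voronoiCell X y := by
  intro w hw
  rcases eq_or_ne w x with rfl | hwx
  · exact hyx
  · exact h w ⟨hw, hwx⟩

theorem mem_voronoiCell_of_mem_diff_singleton' (h : z ∈ voronoiCell (X \ {x}) y)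
    (hxy : dist z x ≤ dist z y) : z ∈ voronoiCell X x := by
  intro w hw
  rcases eq_or_ne w x with rfl | hwx
  · exact le_rfl
  · exact hxy.trans (h w ⟨hw, hwx⟩)

theorem voronoiCell_inter_nonempty_of_mem_diff_singleton (hy : y ∈ X)
    (hzx : z ∈ voronoiCell X x) (hzy : z ∈ voronoiCell (X \ {x}) y) :
    (voronoiCell X x ∩ voronoiCell X y).Nonempty := by
  obtain ⟨p, hp, hpxy⟩ := (convex_segment z y).isPreconnected.intermediate_value₂
    (left_mem_segment ℝ z y) (right_mem_segment ℝ z y) (f := fun p => dist p x)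
    (g := fun p => dist p y) (by fun_prop) (by fun_prop) (hzx y hy)
    (by simp)
  have hpy : p ∈ voronoiCell (X \ {x}) y := by
    rw [segment_symm] at hp
    exact starConvex_iff_segment_subset.1 (starConvex_voronoiCell _ y) hzy hp
  exact ⟨p, mem_voronoiCell_of_mem_diff_singleton' hpy hpxy.le,
    mem_voronoiCell_of_mem_diff_singleton hpy hpxy.ge⟩

theorem exists_mem_voronoiCell
    (hX : ∀ C : Set (EuclideanSpace ℝ (Fin d)), IsCompact C → (X ∩ C).Finite)
    (hne : X.Nonempty) (z : EuclideanSpace ℝ (Fin d)) : ∃ y ∈ X, z ∈ voronoiCell X y := by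
  obtain ⟨y₀, hy₀⟩ := hne
  have hy₀ball : y₀ ∈ X ∩ closedBall z (dist y₀ z) := ⟨hy₀, mem_closedBall.2 le_rfl⟩
  obtain ⟨y, ⟨hy, -⟩, hmin⟩ := Set.exists_min_image _ (dist z)
    (hX _ (isCompact_closedBall z (dist y₀ z))) ⟨y₀, hy₀ball⟩
  refine ⟨y, hy, fun w hw => ?_⟩
  by_cases hwz : dist w z ≤ dist y₀ z
  · exact hmin w ⟨hw, mem_closedBall.2 hwz⟩
  · calc dist z y ≤ dist z y₀ := hmin y₀ hy₀ball
      _ ≤ dist z w := by rw [dist_comm z, dist_comm z]; exact (not_le.1 hwz).le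

end Voronoi

theorem voronoiApprox_remove_point_of_neighbors_same_side
    {d : ℕ} (X K : Set (EuclideanSpace ℝ (Fin d)))
    (hXlf : ∀ C : Set (EuclideanSpace ℝ (Fin d)), IsCompact C → (X ∩ C).Finite)
    (x : EuclideanSpace ℝ (Fin d)) (hx : x ∈ X)
    (hXx : (X \ {x}).Nonempty)
    (hnb : ∀ y ∈ X, (voronoiCell X x ∩ voronoiCell X y).Nonempty → (y ∈ K ↔ x ∈ K)) :
    voronoiApprox (X \ {x}) K = voronoiApprox X K := by
  ext z
  simp only [voronoiApprox, Set.mem_iUnion₂, Set.mem_inter_iff, exists_prop]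
  constructor
  · rintro ⟨y, ⟨⟨hyX, -⟩, hyK⟩, hzy⟩
    rcases le_total (dist z y) (dist z x) with hle | hle
    · exact ⟨y, ⟨hyX, hyK⟩, mem_voronoiCell_of_mem_diff_singleton hzy hle⟩
    · have hzx := mem_voronoiCell_of_mem_diff_singleton' hzy hle
      have hxK := (hnb y hyX (voronoiCell_inter_nonempty_of_mem_diff_singleton hyX hzx hzy)).1 hyK
      exact ⟨x, ⟨hx, hxK⟩, hzx⟩
  · rintro ⟨y, ⟨hyX, hyK⟩, hzy⟩
    rcases eq_or_ne y x with rfl | hyx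
    · obtain ⟨w, hw, hzw⟩ := exists_mem_voronoiCell
        (fun C hC => (hXlf C hC).subset (Set.inter_subset_inter_left C Set.sdiff_subset)) hXx z
      have hwK := (hnb w hw.1 (voronoiCell_inter_nonempty_of_mem_diff_singleton hw.1 hzy hzw)).2 hyK
      exact ⟨w, ⟨hw, hwK⟩, hzw⟩
    · exact ⟨y, ⟨⟨hyX, hyx⟩, hyK⟩, voronoiCell_anti Set.sdiff_subset hzy⟩
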